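/- arXiv:2208.13069 — 2 statements merged into one kernel-verified Lean document; each statement's English description precedes it below -/
import Mathlib

section
/- Let M be a finite subset of a countable group G, let V be a finite-dimensional vector space over a finite field (so V is a finite set), let S = L(V^M, V), and let s, t ∈ S^G be such that σ_s ∘ σ_t = id on V^G. Then σ_p is post-surjective for every p ∈ Σ(s); that is, σ_s is stably post-surjective. -/
open scoped BigOperators

/-- The linear NUCA `σ_s : V^G → V^G` with memory `M ⊆ G` associated with the
configuration of local defining maps `s`, given in coefficient form:
`σ_s(x)(g) = ∑_{m ∈ M} s(g,m)(x(g·m))`. -/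
def nucaMap {k V G : Type*} [Field k] [AddCommGroup V] [Module k V] [Group G]
    (M : Finset G) (s : G → G → (V →ₗ[k] V)) (x : G → V) : G → V :=
  fun g => ∑ m ∈ M, s g m (x (g * m))

/-- Two configurations are asymptotic if they agree outside a finite set. -/
def Asymptotic {G A : Type*} (x y : G → A) : Prop :=
  Set.Finite {g : G | x g ≠ y g}

/-- A map `σ : V^G → V^G` is post-surjective if for all `x, y` with `y` asymptotic to
`σ(x)` there is `z` asymptotic to `x` with `σ(z) = y`. -/
def PostSurjective {G V : Type*} (σ : (G → V) → (G → V)) : Prop :=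
  ∀ x y : G → V, Asymptotic y (σ x) → ∃ z : G → V, Asymptotic z x ∧ σ z = y

/-- `Σ(s)`: the closure, in the prodiscrete topology (local maps `S` discrete),
of the shift orbit `{g·s : g ∈ G}` of the configuration of local defining maps `s`,
where `(g·s)(h) = s(g⁻¹h)`. -/
def orbitClosure {G E : Type*} [Group G] (s : G → G → E) : Set (G → G → E) :=
  @closure _ (@Pi.topologicalSpace G (fun _ => G → E) (fun _ => ⊥))
    (Set.range fun g : G => fun h : G => s (g⁻¹ * h))

/-!
Along an ultrafilter `U` on `G` for which the shifts `γ • s` converge to `p`, the shifts `γ • t`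
also converge, to some `q`, because each coefficient takes values in the finite set `End_k(V)`.
On any finite window `p, q` then look like `γ • s, γ • t` for a single `γ`, so the local
identity `σ_s ∘ σ_t = id` transfers to `σ_p ∘ σ_q = id`. A right-invertible NUCA `σ_p` is
post-surjective: to reach `y` from `x`, add to `x` the finitely supported correction
`σ_q (y - σ_p x)`.
-/

open Filter Function Topology

lemma asymptotic_iff_finite_support_sub {G A : Type*} [AddGroup A] {x y : G → A} :
    Asymptotic x y ↔ (support (x - y)).Finite := by
  simp only [Asymptotic, support, Pi.sub_apply, sub_ne_zero]

section Nuca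

variable {k V G : Type*} [Field k] [AddCommGroup V] [Module k V] [Group G] {M : Finset G}

lemma nucaMap_add (p : G → G → (V →ₗ[k] V)) (x y : G → V) :
    nucaMap M p (x + y) = nucaMap M p x + nucaMap M p y := by
  funext g
  simp only [nucaMap, Pi.add_apply, map_add, Finset.sum_add_distrib]

lemma finite_support_nucaMap (p : G → G → (V →ₗ[k] V)) {x : G → V}
    (hx : (support x).Finite) : (support (nucaMap M p x)).Finite := by
  refine (M.finite_toSet.biUnion fun m _ => hx.image (· * m⁻¹)).subset fun g hg => ?_
  obtain ⟨m, hm, hxm⟩ : ∃ m ∈ M, x (g * m) ≠ 0 := by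
    by_contra! hzero
    exact hg (Finset.sum_eq_zero fun m hm => by rw [hzero m hm, map_zero])
  exact Set.mem_biUnion hm ⟨g * m, hxm, by group⟩

lemma postSurjective_of_comp_eq_id {p q : G → G → (V →ₗ[k] V)}
    (hpq : ∀ x, nucaMap M p (nucaMap M q x) = x) : PostSurjective (nucaMap M p) := by
  intro x y hy
  rw [asymptotic_iff_finite_support_sub] at hy
  refine ⟨x + nucaMap M q (y - nucaMap M p x), ?_, ?_⟩
  · rw [asymptotic_iff_finite_support_sub, add_sub_cancel_left]
    exact finite_support_nucaMap q hy
  · rw [nucaMap_add, hpq, add_sub_cancel]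

lemma nucaMap_comp_apply_eq_of_shift {p q s t : G → G → (V →ₗ[k] V)} {g γ : G}
    (hp : p g = s (γ⁻¹ * g)) (hq : ∀ m ∈ M, ∀ m' ∈ M, q (g * m) m' = t (γ⁻¹ * (g * m)) m')
    (x : G → V) :
    nucaMap M p (nucaMap M q x) g = nucaMap M s (nucaMap M t fun h => x (γ * h)) (γ⁻¹ * g) := by
  simp only [nucaMap, hp, mul_assoc, mul_inv_cancel_left]
  refine Finset.sum_congr rfl fun m hm => congrArg _ (Finset.sum_congr rfl fun m' hm' => ?_)
  rw [hq m hm m' hm']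

end Nuca

lemma Ultrafilter.exists_eventually_eq {α E : Type*} [Finite E] (U : Ultrafilter α) (f : α → E) :
    ∃ v : E, ∀ᶠ a in U, f a = v := by
  obtain ⟨v, hv⟩ := (U.map f).eq_pure_of_finite
  have hv' : {v} ∈ U.map f := by rw [hv]; exact Ultrafilter.mem_pure.2 rfl
  exact ⟨v, Ultrafilter.mem_map.1 hv'⟩

lemma exists_ultrafilter_shift_eventually_eq {G E : Type*} [Group G] {s p : G → G → E}
    (hp : p ∈ orbitClosure s) :
    ∃ U : Ultrafilter G, ∀ F : Finset G, ∀ᶠ γ in U, ∀ h ∈ F, p h = s (γ⁻¹ * h) := by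
  let _ : TopologicalSpace (G → E) := ⊥
  have : DiscreteTopology (G → E) := ⟨rfl⟩
  set shift : G → G → G → E := fun γ h => s (γ⁻¹ * h)
  have : NeBot (comap shift (𝓝 p)) := comap_neBot_iff.2 fun O hO => by
    obtain ⟨_, hO, γ, rfl⟩ := mem_closure_iff_nhds.1 hp O hO
    exact ⟨γ, hO⟩
  refine ⟨.of (comap shift (𝓝 p)), fun F => Ultrafilter.of_le _ ?_⟩
  have hF : (F : Set G).pi (fun h => {p h}) ∈ 𝓝 p :=
    (isOpen_set_pi F.finite_toSet fun h _ => isOpen_discrete {p h}).mem_nhds fun h _ => rfl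
  exact mem_of_superset (preimage_mem_comap hF) fun γ hγ h hh => (hγ h hh).symm

theorem stmt4_general {k V G : Type*} [Field k] [Finite k] [AddCommGroup V] [Module k V]
    [FiniteDimensional k V] [Group G]
    (M : Finset G) (s t : G → G → (V →ₗ[k] V))
    (h : ∀ x : G → V, nucaMap M s (nucaMap M t x) = x) :
    ∀ p ∈ orbitClosure s, PostSurjective (nucaMap M p) := by
  have : Finite (V →ₗ[k] V) := Module.finite_of_finite k
  intro p hp
  obtain ⟨U, hU⟩ := exists_ultrafilter_shift_eventually_eq hp
  choose q hq using fun g m => U.exists_eventually_eq fun γ => t (γ⁻¹ * g) m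
  refine postSurjective_of_comp_eq_id (q := q) fun x => funext fun g => ?_
  obtain ⟨γ, hγp, hγq⟩ := ((hU {g}).and <| (eventually_all_finset M).2 fun m _ =>
    (eventually_all_finset M).2 fun m' _ => hq (g * m) m').exists
  rw [nucaMap_comp_apply_eq_of_shift (hγp g (Finset.mem_singleton_self g))
    (fun m hm m' hm' => (hγq m hm m' hm').symm), h, mul_inv_cancel_left]

/-- Over a finite vector space alphabet, a right-invertible linear NUCA is stably
post-surjective: if `σ_s ∘ σ_t = id` then `σ_p` is post-surjective for every
`p ∈ Σ(s)`. -/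
theorem stmt4 {k V G : Type*} [Field k] [Finite k] [AddCommGroup V] [Module k V]
    [FiniteDimensional k V] [Group G] [Countable G]
    (M : Finset G) (s t : G → G → (V →ₗ[k] V))
    (hs : ∀ g, ∀ m ∉ M, s g m = 0) (ht : ∀ g, ∀ m ∉ M, t g m = 0)
    (h : ∀ x : G → V, nucaMap M s (nucaMap M t x) = x) :
    ∀ p ∈ orbitClosure s, PostSurjective (nucaMap M p) :=
  stmt4_general M s t h
end

section
/- Let M be a finite subset of a countable group G, let V be a finite-dimensional vector space over a field k with dual V*, and let S = L(V^M, V). Write VG for the set of finitely supported maps G → V and V*G for the set of finitely supported maps G → V*. Then for every s ∈ S^G the following four identities hold: (i) {d ∈ (V*)^G : Σ_{g∈G} d(g)(z(g)) = 0 for every z ∈ VG with σ_s(z) = 0} = σ_{s*}((V*)^G); (ii) {ω ∈ V*G : Σ_{g∈G} ω(g)(x(g)) = 0 for every x ∈ V^G with σ_s(x) = 0} = σ_{s*}(V*G); (iii) {d ∈ (V*)^G : Σ_{g∈G} d(g)(σ_s(z)(g)) = 0 for every z ∈ VG} = {d ∈ (V*)^G : σ_{s*}(d) = 0}; (iv)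 {ω ∈ V*G : Σ_{g∈G} ω(g)(σ_s(x)(g)) = 0 for every x ∈ V^G} = {ω ∈ V*G : σ_{s*}(ω) = 0}. -/
open scoped BigOperators Pointwise

/-- The dual configuration `s*` of local defining maps, in coefficient form:
`s*(g,m) = (s(g·m, m⁻¹))ᵀ`, the transpose (dual map) of `s(g·m, m⁻¹)`. -/
def dualCoeff {k V G : Type*} [Field k] [AddCommGroup V] [Module k V] [Group G]
    (s : G → G → (V →ₗ[k] V)) :
    G → G → (Module.Dual k V →ₗ[k] Module.Dual k V) :=
  fun g m => (s (g * m) m⁻¹).dualMap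

section Aux

variable {k V G : Type*} [Field k] [AddCommGroup V] [Module k V] [Group G] [DecidableEq G]

/-- `nucaMap` as a linear map. -/
def nucaLin (M : Finset G) (s : G → G → (V →ₗ[k] V)) : (G → V) →ₗ[k] (G → V) where
  toFun := nucaMap M s
  map_add' x y := by funext g; simp [nucaMap, Finset.sum_add_distrib]
  map_smul' c x := by funext g; simp [nucaMap, Finset.smul_sum]

lemma nucaLin_apply (M : Finset G) (s : G → G → (V →ₗ[k] V)) (x : G → V) :
    nucaLin M s x = nucaMap M s x := rfl

lemma nucaMap_support_finite (M : Finset G) (s : G → G → (V →ₗ[k] V)) {x : G → V}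
    (hx : (Function.support x).Finite) :
    (Function.support (nucaMap M s x)).Finite := by
  refine (Set.Finite.image2 (fun a m => a * m⁻¹) hx M.finite_toSet).subset ?_
  intro g hg
  obtain ⟨m, hm, hne⟩ := Finset.exists_ne_zero_of_sum_ne_zero hg
  have hz : x (g * m) ≠ 0 := fun h => hne (by simp [h])
  exact ⟨g * m, hz, m, hm, by group⟩

/-- The submodule of finitely supported configurations. -/
def finSuppSub (k : Type*) (V G : Type*) [Field k] [AddCommGroup V] [Module k V] :
    Submodule k (G → V) where
  carrier := {x | (Function.support x).Finite}
  add_mem' := fun {a b} ha hb => ((ha.union hb).subset (Function.support_add _ _))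
  zero_mem' := by simp [Function.support_zero]
  smul_mem' := fun c x hx => hx.subset (Function.support_const_smul_subset _ _)

lemma mem_finSuppSub {x : G → V} : x ∈ finSuppSub k V G ↔ (Function.support x).Finite :=
  ⟨fun h => h, fun h => h⟩

/-- Core reindexing identity. -/
lemma core_sum (M : Finset G) (s : G → G → (V →ₗ[k] V)) (d : G → Module.Dual k V)
    (z : G → V) (A B : Finset G)
    (h₁ : ∀ g m, g ∈ A → m ∈ M → (g * m ∈ B ∨ z (g * m) = 0))
    (h₂ : ∀ g m, g ∈ B → m ∈ M⁻¹ → (g * m ∈ A ∨ d (g * m) = 0)) :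
    ∑ g ∈ A, ∑ m ∈ M, d g (s g m (z (g * m)))
      = ∑ g ∈ B, ∑ m ∈ M⁻¹, d (g * m) (s (g * m) m⁻¹ (z g)) := by
  classical
  rw [← Finset.sum_product' (s := A) (t := M)
      (f := fun g m => d g (s g m (z (g * m)))),
    ← Finset.sum_product' (s := B) (t := M⁻¹)
      (f := fun g m => d (g * m) (s (g * m) m⁻¹ (z g)))]
  rw [← Finset.sum_filter_of_ne (s := A ×ˢ M) (p := fun p => p.1 * p.2 ∈ B)
      (f := fun p => d p.1 (s p.1 p.2 (z (p.1 * p.2)))) (fun p hp hne => by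
        rcases Finset.mem_product.1 hp with ⟨hp1, hp2⟩
        rcases h₁ p.1 p.2 hp1 hp2 with h | h
        · exact h
        · exact absurd (by simp [h]) hne),
    ← Finset.sum_filter_of_ne (s := B ×ˢ M⁻¹) (p := fun p => p.1 * p.2 ∈ A)
      (f := fun p => d (p.1 * p.2) (s (p.1 * p.2) p.2⁻¹ (z p.1))) (fun p hp hne => by
        rcases Finset.mem_product.1 hp with ⟨hp1, hp2⟩
        rcases h₂ p.1 p.2 hp1 hp2 with h | h
        · exact h
        · exact absurd (by simp [h]) hne)]
  refine Finset.sum_nbij' (fun p => (p.1 * p.2, p.2⁻¹)) (fun p => (p.1 * p.2, p.2⁻¹))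
    ?_ ?_ ?_ ?_ ?_
  · intro p hp
    simp only [Finset.mem_filter, Finset.mem_product] at hp ⊢
    exact ⟨⟨hp.2, Finset.inv_mem_inv hp.1.2⟩, by simpa using hp.1.1⟩
  · intro p hp
    simp only [Finset.mem_filter, Finset.mem_product] at hp ⊢
    refine ⟨⟨hp.2, ?_⟩, by simpa using hp.1.1⟩
    rw [← inv_inv M]
    exact Finset.inv_mem_inv hp.1.2
  · intro p _; simp
  · intro p _; simp
  · intro p _; simp

/-- Unfolding the dual NUCA applied pointwise. -/
lemma dual_nuca_apply (M : Finset G) (s : G → G → (V →ₗ[k] V)) (d : G → Module.Dual k V)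
    (g : G) (v : V) :
    (nucaMap M⁻¹ (dualCoeff s) d g) v = ∑ m ∈ M⁻¹, d (g * m) (s (g * m) m⁻¹ v) := by
  simp [nucaMap, dualCoeff]

/-- Pairing lemma A : `z` finitely supported. -/
lemma pairingA (M : Finset G) (s : G → G → (V →ₗ[k] V)) (d : G → Module.Dual k V)
    {z : G → V} (hz : (Function.support z).Finite) :
    ∑ᶠ g, d g (nucaMap M s z g) = ∑ᶠ g, (nucaMap M⁻¹ (dualCoeff s) d g) (z g) := by
  classical
  set S : Finset G := hz.toFinset with hS
  have hmemS : ∀ {g : G}, z g ≠ 0 → g ∈ S := fun {g} h => by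
    simp [hS, Set.Finite.mem_toFinset, Function.mem_support, h]
  have hLHS : (Function.support fun g => d g (nucaMap M s z g)) ⊆ ↑(S * M⁻¹) := by
    intro g hg
    have hne : nucaMap M s z g ≠ 0 := fun h => hg (by simp [h])
    obtain ⟨m, hm, hne'⟩ := Finset.exists_ne_zero_of_sum_ne_zero hne
    have hz' : z (g * m) ≠ 0 := fun h => hne' (by simp [h])
    have h2 := Finset.mul_mem_mul (hmemS hz') (Finset.inv_mem_inv hm)
    rw [mul_inv_cancel_right] at h2
    exact Finset.mem_coe.2 h2
  have hRHS : (Function.support fun g => (nucaMap M⁻¹ (dualCoeff s) d g) (z g)) ⊆ ↑S := by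
    intro g hg
    have : z g ≠ 0 := fun h => hg (by simp [h])
    simpa using hmemS this
  rw [finsum_eq_finset_sum_of_support_subset _ hLHS,
    finsum_eq_finset_sum_of_support_subset _ hRHS]
  have e1 : ∀ g, d g (nucaMap M s z g) = ∑ m ∈ M, d g (s g m (z (g * m))) := fun g => by
    simp [nucaMap, map_sum]
  have e2 : ∀ g, (nucaMap M⁻¹ (dualCoeff s) d g) (z g)
      = ∑ m ∈ M⁻¹, d (g * m) (s (g * m) m⁻¹ (z g)) := fun g => dual_nuca_apply M s d g (z g)
  rw [Finset.sum_congr rfl fun g _ => e1 g, Finset.sum_congr rfl fun g _ => e2 g]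
  refine core_sum M s d z (S * M⁻¹) S ?_ ?_
  · intro g m _ _
    by_cases h : z (g * m) = 0
    · exact Or.inr h
    · exact Or.inl (hmemS h)
  · intro g m hg hm
    exact Or.inl (Finset.mul_mem_mul hg hm)

/-- Pairing lemma B : `d` finitely supported. -/
lemma pairingB (M : Finset G) (s : G → G → (V →ₗ[k] V)) {d : G → Module.Dual k V}
    (hd : (Function.support d).Finite) (z : G → V) :
    ∑ᶠ g, d g (nucaMap M s z g) = ∑ᶠ g, (nucaMap M⁻¹ (dualCoeff s) d g) (z g) := by
  classical
  set S : Finset G := hd.toFinset with hS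
  have hmemS : ∀ {g : G}, d g ≠ 0 → g ∈ S := fun {g} h => by
    simp [hS, Set.Finite.mem_toFinset, Function.mem_support, h]
  have hLHS : (Function.support fun g => d g (nucaMap M s z g)) ⊆ ↑S := by
    intro g hg
    have : d g ≠ 0 := fun h => hg (by simp [h])
    simpa using hmemS this
  have hRHS : (Function.support fun g => (nucaMap M⁻¹ (dualCoeff s) d g) (z g)) ⊆ ↑(S * M) := by
    intro g hg
    rw [Function.mem_support, dual_nuca_apply] at hg
    obtain ⟨m, hm, hne⟩ := Finset.exists_ne_zero_of_sum_ne_zero hg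
    have hd' : d (g * m) ≠ 0 := fun h => hne (by simp [h])
    have hminv : m⁻¹ ∈ M := Finset.mem_inv'.1 hm
    have h2 := Finset.mul_mem_mul (hmemS hd') hminv
    rw [mul_inv_cancel_right] at h2
    exact Finset.mem_coe.2 h2
  rw [finsum_eq_finset_sum_of_support_subset _ hLHS,
    finsum_eq_finset_sum_of_support_subset _ hRHS]
  have e1 : ∀ g, d g (nucaMap M s z g) = ∑ m ∈ M, d g (s g m (z (g * m))) := fun g => by
    simp [nucaMap, map_sum]
  have e2 : ∀ g, (nucaMap M⁻¹ (dualCoeff s) d g) (z g)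
      = ∑ m ∈ M⁻¹, d (g * m) (s (g * m) m⁻¹ (z g)) := fun g => dual_nuca_apply M s d g (z g)
  rw [Finset.sum_congr rfl fun g _ => e1 g, Finset.sum_congr rfl fun g _ => e2 g]
  refine core_sum M s d z S (S * M) ?_ ?_
  · intro g m hg hm
    exact Or.inl (Finset.mul_mem_mul hg hm)
  · intro g m _ _
    by_cases h : d (g * m) = 0
    · exact Or.inr h
    · exact Or.inl (hmemS h)

lemma single_supp_finite (g : G) (v : V) :
    (Function.support (Pi.single g v : G → V)).Finite :=
  (Set.finite_singleton g).subset Pi.support_single_subset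

lemma finsum_apply_single (d : G → Module.Dual k V) (g₀ : G) (v : V) :
    ∑ᶠ g, d g ((Pi.single g₀ v : G → V) g) = d g₀ v := by
  rw [show d g₀ v = d g₀ ((Pi.single g₀ v : G → V) g₀) by rw [Pi.single_eq_same]]
  refine finsum_eq_single (fun g => d g ((Pi.single g₀ v : G → V) g)) g₀ fun g hg => ?_
  simp [Pi.single_eq_of_ne hg]

lemma finsum_single_apply (φ : Module.Dual k V) (g₀ : G) (y : G → V) :
    ∑ᶠ g, (Pi.single g₀ φ : G → Module.Dual k V) g (y g) = φ (y g₀) := by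
  rw [show φ (y g₀) = (Pi.single g₀ φ : G → Module.Dual k V) g₀ (y g₀) by rw [Pi.single_eq_same]]
  refine finsum_eq_single (fun g => (Pi.single g₀ φ : G → Module.Dual k V) g (y g)) g₀
    fun g hg => ?_
  simp [Pi.single_eq_of_ne hg]

lemma eq_sum_single {z : G → V} (hz : (Function.support z).Finite) :
    z = ∑ g ∈ hz.toFinset, Pi.single g (z g) := by
  funext h
  rw [Finset.sum_apply, Finset.sum_pi_single]
  split_ifs with hh
  · rfl
  · rw [Set.Finite.mem_toFinset, Function.mem_support, not_not] at hh
    exact hh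

lemma map_eq_finsum_single (E : (G → V) →ₗ[k] k) {z : G → V}
    (hz : (Function.support z).Finite) :
    E z = ∑ᶠ g, E (Pi.single g (z g)) := by
  have h1 : (Function.support fun g => E (Pi.single g (z g))) ⊆ ↑hz.toFinset := by
    intro g hg
    rw [Set.Finite.coe_toFinset]
    by_contra h0
    exact hg (by simp [Function.notMem_support.1 h0])
  rw [finsum_eq_finset_sum_of_support_subset _ h1]
  conv_lhs => rw [eq_sum_single hz]
  rw [map_sum]

end Aux

section Hard

variable {k V G : Type*} [Field k] [AddCommGroup V] [Module k V] [Group G] [DecidableEq G]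

lemma supp_pair (d : G → Module.Dual k V) (z : G → V) :
    (Function.support fun g => d g (z g)) ⊆ Function.support z := by
  intro g hg h0
  exact hg (by simp [h0])

lemma parti_hard (M : Finset G) (s : G → G → (V →ₗ[k] V)) (d : G → Module.Dual k V)
    (hd : ∀ z : G → V, (Function.support z).Finite → nucaMap M s z = 0 →
      ∑ᶠ g : G, d g (z g) = 0) :
    ∃ e : G → Module.Dual k V, nucaMap M⁻¹ (dualCoeff s) e = d := by
  classical
  set A := finSuppSub k V G with hA
  let T : A →ₗ[k] (G → V) := (nucaLin M s).comp A.subtype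
  let Dlin : A →ₗ[k] k :=
    { toFun := fun z => ∑ᶠ g, d g (z.1 g)
      map_add' := fun z w => by
        have h1 := (z.2.subset (supp_pair d z.1))
        have h2 := (w.2.subset (supp_pair d w.1))
        simp only [Submodule.coe_add, Pi.add_apply, map_add]
        rw [finsum_add_distrib h1 h2]
      map_smul' := fun c z => by
        simp only [Submodule.coe_smul, Pi.smul_apply, map_smul, RingHom.id_apply]
        rw [← smul_finsum' c (z.2.subset (supp_pair d z.1))] }
  have hker : LinearMap.ker T ≤ LinearMap.ker Dlin := by
    intro z hz
    exact hd z.1 z.2 (LinearMap.mem_ker.1 hz)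
  let f0 : (A ⧸ LinearMap.ker T) →ₗ[k] k := (LinearMap.ker T).liftQ Dlin hker
  let f : LinearMap.range T →ₗ[k] k := f0 ∘ₗ T.quotKerEquivRange.symm.toLinearMap
  obtain ⟨E, hE⟩ := LinearMap.exists_extend f
  have hET : ∀ z : A, E (T z) = Dlin z := by
    intro z
    have h1 : T z ∈ LinearMap.range T := LinearMap.mem_range_self T z
    have h2 : E (T z) = f ⟨T z, h1⟩ := by
      conv_lhs => rw [show (T z : G → V) = (LinearMap.range T).subtype ⟨T z, h1⟩ from rfl]
      rw [← LinearMap.comp_apply, hE]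
    rw [h2]
    show f0 (T.quotKerEquivRange.symm ⟨T z, h1⟩) = Dlin z
    rw [LinearMap.quotKerEquivRange_symm_apply_image]
    exact Submodule.liftQ_apply _ _ _
  refine ⟨fun g => E ∘ₗ LinearMap.single k (fun _ : G => V) g, ?_⟩
  set e : G → Module.Dual k V := fun g => E ∘ₗ LinearMap.single k (fun _ : G => V) g with he
  funext g
  refine LinearMap.ext fun v => ?_
  have hsingle : (Function.support (Pi.single g v : G → V)).Finite := single_supp_finite g v
  have h1 : d g v = Dlin ⟨Pi.single g v, hsingle⟩ := (finsum_apply_single d g v).symm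
  have h2 : Dlin ⟨Pi.single g v, hsingle⟩ = E (nucaMap M s (Pi.single g v)) :=
    (hET ⟨Pi.single g v, hsingle⟩).symm
  have h3 : E (nucaMap M s (Pi.single g v)) = ∑ᶠ g', e g' (nucaMap M s (Pi.single g v) g') := by
    rw [map_eq_finsum_single E (nucaMap_support_finite M s hsingle)]
    exact finsum_congr fun g' => rfl
  have h4 := pairingA M s e hsingle
  have h5 : ∑ᶠ g', (nucaMap M⁻¹ (dualCoeff s) e g') ((Pi.single g v : G → V) g')
      = (nucaMap M⁻¹ (dualCoeff s) e g) v := finsum_apply_single _ g v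
  exact ((h1.trans h2).trans ((h3.trans h4).trans h5)).symm

lemma partii_hard [FiniteDimensional k V] (M : Finset G) (s : G → G → (V →ₗ[k] V))
    (ω : G → Module.Dual k V) (hω : (Function.support ω).Finite)
    (H : ∀ x : G → V, nucaMap M s x = 0 → ∑ᶠ g : G, ω g (x g) = 0) :
    ∃ η : G → Module.Dual k V, (Function.support η).Finite ∧
      nucaMap M⁻¹ (dualCoeff s) η = ω := by
  classical
  by_contra hcon
  push_neg at hcon
  set W : Submodule k (G → Module.Dual k V) :=
    Submodule.map (nucaLin M⁻¹ (dualCoeff s)) (finSuppSub k (Module.Dual k V) G) with hW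
  have hωW : ω ∉ W := by
    intro hmem
    obtain ⟨η, hη, hηω⟩ := hmem
    exact hcon η hη hηω
  have hne : (Submodule.Quotient.mk ω : (G → Module.Dual k V) ⧸ W) ≠ 0 := by
    simpa [Submodule.Quotient.mk_eq_zero] using hωW
  obtain ⟨F0, hF0⟩ : ∃ F0 : Module.Dual k ((G → Module.Dual k V) ⧸ W),
      F0 (Submodule.Quotient.mk ω) ≠ 0 := by
    by_contra hc
    push_neg at hc
    exact hne ((Module.forall_dual_apply_eq_zero_iff k _).1 hc)
  set F : Module.Dual k (G → Module.Dual k V) := F0 ∘ₗ W.mkQ with hF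
  have hFW : ∀ w ∈ W, F w = 0 := by
    intro w hw
    have : W.mkQ w = 0 := by
      rw [Submodule.mkQ_apply]
      exact (Submodule.Quotient.mk_eq_zero W).2 hw
    simp [hF, this]
  have hFω : F ω ≠ 0 := hF0
  set x : G → V := fun g =>
    (Module.evalEquiv k V).symm (F ∘ₗ LinearMap.single k (fun _ : G => Module.Dual k V) g)
    with hx
  have hxφ : ∀ (g : G) (φ : Module.Dual k V), φ (x g) = F (Pi.single g φ) := by
    intro g φ
    rw [hx]
    exact Module.apply_evalEquiv_symm_apply k V φ _
  have step1 : ∀ η : G → Module.Dual k V, (Function.support η).Finite →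
      F η = ∑ᶠ g, η g (x g) := by
    intro η hη
    rw [map_eq_finsum_single F hη]
    exact finsum_congr fun g => (hxφ g (η g)).symm
  have step2 : nucaMap M s x = 0 := by
    funext g
    rw [Pi.zero_apply, ← Module.forall_dual_apply_eq_zero_iff k]
    intro φ
    have e1 : φ (nucaMap M s x g)
        = ∑ᶠ g', (Pi.single g φ : G → Module.Dual k V) g' (nucaMap M s x g') :=
      (finsum_single_apply φ g _).symm
    have e2 := pairingB M s (single_supp_finite g φ) x
    have e3 : ∑ᶠ g', (nucaMap M⁻¹ (dualCoeff s) (Pi.single g φ) g') (x g')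
        = F (nucaMap M⁻¹ (dualCoeff s) (Pi.single g φ)) :=
      (step1 _ (nucaMap_support_finite _ _ (single_supp_finite g φ))).symm
    have e4 : F (nucaMap M⁻¹ (dualCoeff s) (Pi.single g φ)) = 0 :=
      hFW _ ⟨Pi.single g φ, single_supp_finite g φ, rfl⟩
    rw [e1, e2, e3, e4]
  have hfin := H x step2
  rw [← step1 ω hω] at hfin
  exact hFω hfin

end Hard

/-- The four orthogonality identities relating `σ_s` and its dual `σ_{s*}`:
(i) `Ker(σ_s|VG)^⊥ = Im(σ_{s*}|(V*)^G)`, (ii) `Ker(σ_s|V^G)^⊥ = Im(σ_{s*}|V*G)`,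
(iii) `Im(σ_s|VG)^⊥ = Ker(σ_{s*}|(V*)^G)`, (iv) `Im(σ_s|V^G)^⊥ = Ker(σ_{s*}|V*G)`,
where `VG` (resp. `V*G`) denotes the finitely supported configurations. -/
theorem stmt9 {k V G : Type*} [Field k] [AddCommGroup V] [Module k V]
    [FiniteDimensional k V] [Group G] [Countable G] [DecidableEq G]
    (M : Finset G) (s : G → G → (V →ₗ[k] V)) (hs : ∀ g, ∀ m ∉ M, s g m = 0) :
    ({d : G → Module.Dual k V |
        ∀ z : G → V, (Function.support z).Finite → nucaMap M s z = 0 →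
          ∑ᶠ g : G, d g (z g) = 0}
      = Set.range (nucaMap M⁻¹ (dualCoeff s))) ∧
    ({ω : G → Module.Dual k V | (Function.support ω).Finite ∧
        ∀ x : G → V, nucaMap M s x = 0 → ∑ᶠ g : G, ω g (x g) = 0}
      = (nucaMap M⁻¹ (dualCoeff s)) ''
          {ω : G → Module.Dual k V | (Function.support ω).Finite}) ∧
    ({d : G → Module.Dual k V |
        ∀ z : G → V, (Function.support z).Finite →
          ∑ᶠ g : G, d g (nucaMap M s z g) = 0}
      = {d : G → Module.Dual k V | nucaMap M⁻¹ (dualCoeff s) d = 0}) ∧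
    ({ω : G → Module.Dual k V | (Function.support ω).Finite ∧
        ∀ x : G → V, ∑ᶠ g : G, ω g (nucaMap M s x g) = 0}
      = {ω : G → Module.Dual k V | (Function.support ω).Finite ∧
          nucaMap M⁻¹ (dualCoeff s) ω = 0}) := by
  refine ⟨?_, ?_, ?_, ?_⟩
  · -- (i)
    ext d
    simp only [Set.mem_setOf_eq, Set.mem_range]
    constructor
    · intro h
      obtain ⟨e, he⟩ := parti_hard M s d h
      exact ⟨e, he⟩
    · rintro ⟨e, rfl⟩ z hz h0
      rw [← pairingA M s e hz, h0]
      simp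
  · -- (ii)
    ext ω
    simp only [Set.mem_setOf_eq, Set.mem_image]
    constructor
    · rintro ⟨hω, H⟩
      obtain ⟨η, hη, hηω⟩ := partii_hard M s ω hω H
      exact ⟨η, hη, hηω⟩
    · rintro ⟨η, hη, rfl⟩
      refine ⟨nucaMap_support_finite _ _ hη, fun x hx => ?_⟩
      rw [← pairingB M s hη x, hx]
      simp
  · -- (iii)
    ext d
    simp only [Set.mem_setOf_eq]
    constructor
    · intro h
      funext g
      refine LinearMap.ext fun v => ?_
      have hp := pairingA M s d (single_supp_finite g v)
      rw [finsum_apply_single] at hp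
      rw [Pi.zero_apply, LinearMap.zero_apply, ← hp]
      exact h _ (single_supp_finite g v)
    · intro h z hz
      rw [pairingA M s d hz, h]
      simp
  · -- (iv)
    ext ω
    simp only [Set.mem_setOf_eq]
    constructor
    · rintro ⟨hω, h⟩
      refine ⟨hω, ?_⟩
      funext g
      refine LinearMap.ext fun v => ?_
      have hp := pairingB M s hω (Pi.single g v)
      rw [finsum_apply_single] at hp
      rw [Pi.zero_apply, LinearMap.zero_apply, ← hp]
      exact h _
    · rintro ⟨hω, h⟩
      refine ⟨hω, fun x => ?_⟩
      rw [pairingB M s hω x, h]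
      simp
end
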